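/- arXiv:1611.01081 — 2 statements merged into one kernel-verified Lean document; each statement's English description precedes it below -/
import Mathlib

section
/- Let X : ℝ → V be a C^∞ function such that iteratedDeriv k X 0 ∈ F^k for every k ∈ ℕ. Then there exist C^∞ functions Y_1, …, Y_N : ℝ → V with Y_i t ∈ W_i for all t, such that X t = Σ_{i=1}^N t^i • Y_i t for all t ∈ ℝ. (Surjectivity of the map Φ^ψ onto the module 𝔛_H.) -/
/-!
Let `π i` be the projection of `V` onto `W i` along the other summands; it is continuous because
`V` is finite-dimensional, so `π i ∘ X` is smooth and its `k`-th derivative at `0` is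
`π i (iteratedDeriv k X 0)`. For `k < i` this vanishes, since `F^k` is spanned by summands other
than `W i`. By Hadamard's lemma a smooth function whose derivatives of order `< n` vanish at `0`
is `t ^ n • g t` with `g` smooth: iterate `f t = t • ∫₀¹ f' (s t) ds`, where
`t ↦ ∫₀¹ s ^ k • h (s t) ds` is smooth with derivative
`t ↦ ∫₀¹ s ^ (k + 1) • h' (s t) ds`.
With `π i ∘ X = t ^ i • g i`, take `Y i := π i ∘ g i`; then
`X = ∑ i, π i ∘ X = ∑ i, t ^ i • Y i`.
-/

open scoped ContDiff

theorem ContinuousLinearMap.iteratedDeriv_comp_left {𝕜 F G : Type*}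
    [NontriviallyNormedField 𝕜] [NormedAddCommGroup F] [NormedSpace 𝕜 F]
    [NormedAddCommGroup G] [NormedSpace 𝕜 G]
    (L : F →L[𝕜] G) {f : 𝕜 → F} {x : 𝕜} {n : ℕ} (hf : ContDiffAt 𝕜 n f x) :
    iteratedDeriv n (L ∘ f) x = L (iteratedDeriv n f x) := by
  simp only [iteratedDeriv_eq_iteratedFDeriv, L.iteratedFDeriv_comp_left hf le_rfl]
  rfl

section Hadamard

variable {E : Type*} [NormedAddCommGroup E] [NormedSpace ℝ E]

noncomputable def hadamardIntegral (k : ℕ) (h : ℝ → E) (t : ℝ) : E :=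
  ∫ s in (0 : ℝ)..1, s ^ k • h (s * t)

theorem hasDerivAt_hadamardIntegral (k : ℕ) {h : ℝ → E} (hh : ContDiff ℝ 1 h) (t : ℝ) :
    HasDerivAt (hadamardIntegral k h) (hadamardIntegral (k + 1) (deriv h) t) t := by
  have hc : Continuous h := hh.continuous
  have hd : Continuous (deriv h) := hh.continuous_deriv le_rfl
  obtain ⟨C, hC⟩ := (isCompact_closedBall (0 : ℝ) (‖t‖ + 1)).exists_bound_of_continuousOn
    hd.continuousOn
  have hbound : ∀ s ∈ Set.uIoc (0 : ℝ) 1, ∀ x ∈ Metric.ball t 1,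
      ‖s ^ (k + 1) • deriv h (s * x)‖ ≤ C := by
    intro s hs x hx
    rw [Set.uIoc_of_le zero_le_one] at hs
    have hs_norm : ‖s‖ ≤ 1 := by rw [Real.norm_of_nonneg hs.1.le]; exact hs.2
    have hsx : s * x ∈ Metric.closedBall 0 (‖t‖ + 1) := by
      rw [mem_closedBall_zero_iff, norm_mul]
      nlinarith [norm_lt_of_mem_ball hx, norm_nonneg s, norm_nonneg x]
    calc ‖s ^ (k + 1) • deriv h (s * x)‖ = ‖s‖ ^ (k + 1) * ‖deriv h (s * x)‖ := by
          rw [norm_smul, norm_pow]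
      _ ≤ 1 * C := mul_le_mul (pow_le_one₀ (norm_nonneg _) hs_norm) (hC _ hsx) (norm_nonneg _)
          zero_le_one
      _ = C := one_mul C
  have hderiv : ∀ s x : ℝ,
      HasDerivAt (fun y => s ^ k • h (s * y)) (s ^ (k + 1) • deriv h (s * x)) x := by
    intro s x
    have := (((hh.differentiable one_ne_zero) (s * x)).hasDerivAt.scomp x
      ((hasDerivAt_id x).const_mul s)).const_smul (s ^ k)
    rwa [mul_one, smul_smul, ← pow_succ] at this
  exact (intervalIntegral.hasDerivAt_integral_of_dominated_loc_of_deriv_le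
    (Metric.ball_mem_nhds t one_pos)
    (.of_forall fun x =>
      ((continuous_pow k).smul (hc.comp (continuous_mul_const x))).aestronglyMeasurable)
    (((continuous_pow k).smul (hc.comp (continuous_mul_const t))).intervalIntegrable 0 1)
    ((continuous_pow (k + 1)).smul (hd.comp (continuous_mul_const t))).aestronglyMeasurable
    (.of_forall hbound) intervalIntegrable_const
    (.of_forall fun s _ x _ => hderiv s x)).2

theorem deriv_hadamardIntegral (k : ℕ) {h : ℝ → E} (hh : ContDiff ℝ 1 h) :
    deriv (hadamardIntegral k h) = hadamardIntegral (k + 1) (deriv h) :=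
  funext fun t => (hasDerivAt_hadamardIntegral k hh t).deriv

theorem iteratedDeriv_hadamardIntegral (m k : ℕ) {h : ℝ → E} (hh : ContDiff ℝ ∞ h) :
    iteratedDeriv m (hadamardIntegral k h) = hadamardIntegral (k + m) (iteratedDeriv m h) := by
  induction m generalizing k h with
  | zero => simp
  | succ m ih =>
    rw [iteratedDeriv_succ', deriv_hadamardIntegral k (hh.of_le (by simp)),
      ih (k + 1) (contDiff_infty_iff_deriv.mp hh).2, ← iteratedDeriv_succ', Nat.add_right_comm,
      Nat.add_assoc]

theorem contDiff_hadamardIntegral (k : ℕ) {h : ℝ → E} (hh : ContDiff ℝ ∞ h) :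
    ContDiff ℝ ∞ (hadamardIntegral k h) :=
  contDiff_of_differentiable_iteratedDeriv fun m _ => by
    have hm : ContDiff ℝ ∞ (iteratedDeriv m h) := by
      rw [iteratedDeriv_eq_iterate]
      exact hh.iterate_deriv m
    rw [iteratedDeriv_hadamardIntegral m k hh]
    exact fun t => (hasDerivAt_hadamardIntegral _ (hm.of_le (by simp)) t).differentiableAt

variable [CompleteSpace E]

theorem hadamardIntegral_apply_zero (k : ℕ) (h : ℝ → E) :
    hadamardIntegral k h 0 = ((k : ℝ) + 1)⁻¹ • h 0 := by
  simp only [hadamardIntegral, mul_zero]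
  rw [intervalIntegral.integral_smul_const, integral_pow]
  norm_num

theorem eq_smul_hadamardIntegral_deriv {f : ℝ → E} (hf : ContDiff ℝ 1 f) (hf0 : f 0 = 0)
    (t : ℝ) : f t = t • hadamardIntegral 0 (deriv f) t := by
  rcases eq_or_ne t 0 with rfl | ht
  · simp [hf0]
  have hftc : ∫ u in (0 : ℝ)..t, deriv f u = f t := by
    rw [intervalIntegral.integral_deriv_eq_sub (fun x _ => hf.differentiable one_ne_zero x)
      ((hf.continuous_deriv le_rfl).intervalIntegrable 0 t), hf0, sub_zero]
  have hscale : hadamardIntegral 0 (deriv f) t = t⁻¹ • ∫ u in (0 : ℝ)..t, deriv f u := by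
    simp only [hadamardIntegral, pow_zero, one_smul]
    rw [intervalIntegral.integral_comp_mul_right (deriv f) ht]
    norm_num
  rw [hscale, hftc, smul_smul, mul_inv_cancel₀ ht, one_smul]

theorem exists_contDiff_eq_pow_smul_of_iteratedDeriv_eq_zero (n : ℕ) {f : ℝ → E}
    (hf : ContDiff ℝ ∞ f) (hvanish : ∀ k < n, iteratedDeriv k f 0 = 0) :
    ∃ g : ℝ → E, ContDiff ℝ ∞ g ∧ ∀ t, f t = t ^ n • g t := by
  induction n generalizing f with
  | zero => exact ⟨f, hf, fun t => by rw [pow_zero, one_smul]⟩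
  | succ n ih =>
    have hf' : ContDiff ℝ ∞ (deriv f) := (contDiff_infty_iff_deriv.mp hf).2
    obtain ⟨g, hg, hfg⟩ := ih (contDiff_hadamardIntegral 0 hf') fun k hk => by
      rw [iteratedDeriv_hadamardIntegral k 0 hf', hadamardIntegral_apply_zero,
        ← iteratedDeriv_succ', hvanish (k + 1) (by omega), smul_zero]
    have hf0 : f 0 = 0 := by simpa using hvanish 0 n.succ_pos
    refine ⟨g, hg, fun t => ?_⟩
    rw [eq_smul_hadamardIntegral_deriv (hf.of_le (by simp)) hf0 t, hfg t, smul_smul,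
      pow_succ']

end Hadamard

namespace DirectSum.IsInternal

variable {ι R M : Type*} [DecidableEq ι] [Semiring R] [AddCommMonoid M] [Module R M]
  {W : ι → Submodule R M} (hW : IsInternal W)

noncomputable def proj (i : ι) : M →ₗ[R] M :=
  (W i).subtype ∘ₗ component R ι (fun i => W i) i ∘ₗ
    (LinearEquiv.ofBijective (coeLinearMap W) hW).symm.toLinearMap

theorem proj_mem (i : ι) (v : M) : hW.proj i v ∈ W i :=
  ((LinearEquiv.ofBijective (coeLinearMap W) hW).symm v i).2

theorem proj_eq_self {i : ι} {v : M} (hv : v ∈ W i) : hW.proj i v = v :=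
  congrArg Subtype.val (hW.ofBijective_coeLinearMap_of_mem hv)

theorem proj_eq_zero_of_mem {i j : ι} (hij : i ≠ j) {v : M} (hv : v ∈ W i) :
    hW.proj j v = 0 :=
  congrArg Subtype.val (hW.ofBijective_coeLinearMap_of_mem_ne hij hv)

theorem proj_proj (i : ι) (v : M) : hW.proj i (hW.proj i v) = hW.proj i v :=
  hW.proj_eq_self (hW.proj_mem i v)

theorem proj_eq_zero_of_mem_biSup {s : Finset ι} {i : ι} (hi : i ∉ s) {v : M}
    (hv : v ∈ ⨆ j ∈ s, W j) : hW.proj i v = 0 :=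
  (iSup₂_le fun _ hj _ hw => hW.proj_eq_zero_of_mem (ne_of_mem_of_not_mem hj hi) hw :
    (⨆ j ∈ s, W j) ≤ LinearMap.ker (hW.proj i)) hv

theorem sum_proj {s : Finset ι} (hs : ∀ i ∉ s, W i = ⊥) (v : M) :
    ∑ i ∈ s, hW.proj i v = v := by
  have hv : v ∈ ⨆ i, W i := hW.submodule_iSup_eq_top ▸ Submodule.mem_top
  refine Submodule.iSup_induction W (motive := fun v => ∑ i ∈ s, hW.proj i v = v) hv
    (fun j x hx => ?_) (by simp) fun x y hx hy => by
      simp only [map_add, Finset.sum_add_distrib, hx, hy]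
  by_cases hj : j ∈ s
  · rw [Finset.sum_eq_single_of_mem j hj fun i _ hij => hW.proj_eq_zero_of_mem (Ne.symm hij) hx,
      hW.proj_eq_self hx]
  · have hx0 : x = 0 := by simpa [hs j hj] using hx
    simp [hx0]

end DirectSum.IsInternal

theorem Phi_surjective_general
    {V : Type*} [NormedAddCommGroup V] [NormedSpace ℝ V] [FiniteDimensional ℝ V]
    (N : ℕ) (W : ℕ → Submodule ℝ V)
    (hW : DirectSum.IsInternal W) (hW0 : W 0 = ⊥) (hWtop : ∀ i : ℕ, N < i → W i = ⊥)
    (X : ℝ → V) (hX : ContDiff ℝ (⊤ : ℕ∞) X)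
    (hXF : ∀ k : ℕ, iteratedDeriv k X 0 ∈ ⨆ i ∈ Finset.Icc 1 (min k N), W i) :
    ∃ Y : ℕ → ℝ → V,
      (∀ i ∈ Finset.Icc 1 N, ContDiff ℝ (⊤ : ℕ∞) (Y i)) ∧
      (∀ i ∈ Finset.Icc 1 N, ∀ t : ℝ, Y i t ∈ W i) ∧
      (∀ t : ℝ, X t = ∑ i ∈ Finset.Icc 1 N, t ^ i • Y i t) := by
  have : CompleteSpace V := FiniteDimensional.complete ℝ V
  let π : ℕ → V →L[ℝ] V := fun i => LinearMap.toContinuousLinearMap (hW.proj i)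
  have hvanish : ∀ i, ∀ k < i, iteratedDeriv k (π i ∘ X) 0 = 0 := fun i k hk => by
    rw [(π i).iteratedDeriv_comp_left (hX.contDiffAt.of_le (m := k) (by exact_mod_cast le_top))]
    refine hW.proj_eq_zero_of_mem_biSup ?_ (hXF k)
    simp only [Finset.mem_Icc, not_and, not_le]
    omega
  choose g hg hXg using fun i =>
    exists_contDiff_eq_pow_smul_of_iteratedDeriv_eq_zero i ((π i).contDiff.comp hX) (hvanish i)
  have hW_outside : ∀ i ∉ Finset.Icc 1 N, W i = ⊥ := fun i hi => by
    rcases i.eq_zero_or_pos with rfl | hi0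
    · exact hW0
    · refine hWtop i ?_
      simp only [Finset.mem_Icc, not_and, not_le] at hi
      exact hi hi0
  refine ⟨fun i => π i ∘ g i, fun i _ => (π i).contDiff.comp (hg i),
    fun i _ t => hW.proj_mem i _, fun t => ?_⟩
  calc X t = ∑ i ∈ Finset.Icc 1 N, π i (X t) := (hW.sum_proj hW_outside (X t)).symm
    _ = ∑ i ∈ Finset.Icc 1 N, t ^ i • π i (g i t) := Finset.sum_congr rfl fun i _ => by
        rw [← map_smul, ← hXg i t]
        exact (hW.proj_proj i (X t)).symm

/-- conversely, a smooth `X : ℝ → V` with `iteratedDeriv k X 0 ∈ F^k` for all `k`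
can be written as `X t = Σ_{i=1}^N t^i • Y_i t` with `Y_i` smooth and valued in `W_i`.
(Surjectivity of `Φ^ψ` onto the module `𝔛_H`.) -/
theorem Phi_surjective
    {V : Type*} [NormedAddCommGroup V] [NormedSpace ℝ V] [FiniteDimensional ℝ V]
    (N : ℕ) (hN : 1 ≤ N) (W : ℕ → Submodule ℝ V)
    (hW : DirectSum.IsInternal W) (hW0 : W 0 = ⊥) (hWtop : ∀ i : ℕ, N < i → W i = ⊥)
    (X : ℝ → V) (hX : ContDiff ℝ (⊤ : ℕ∞) X)
    (hXF : ∀ k : ℕ, iteratedDeriv k X 0 ∈ ⨆ i ∈ Finset.Icc 1 (min k N), W i) :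
    ∃ Y : ℕ → ℝ → V,
      (∀ i ∈ Finset.Icc 1 N, ContDiff ℝ (⊤ : ℕ∞) (Y i)) ∧
      (∀ i ∈ Finset.Icc 1 N, ∀ t : ℝ, Y i t ∈ W i) ∧
      (∀ t : ℝ, X t = ∑ i ∈ Finset.Icc 1 N, t ^ i • Y i t) :=
  Phi_surjective_general N W hW hW0 hWtop X hX hXF
end

section
/- For each 1 ≤ i ≤ N let Y_i : ℝ → V be a C^∞ function with Y_i t ∈ W_i for all t, and define X : ℝ → V by X t := Σ_{i=1}^N t^i • Y_i t. Then for every i with 1 ≤ i ≤ N, ((i)!⁻¹ : ℝ) • iteratedDeriv i X 0 − Y_i 0 ∈ F^{i−1}. (This says the evaluation map ev_0^H, whose i-th component is the class of (1/i!)·∂_t^i X|_{t=0} modulo F^{i−1}, agrees with restriction to t = 0 under the isomorphism Φ^ψ.) -/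
/-!
By Leibniz's rule, the `i`-th derivative at `0` of `t ↦ t ^ j • Y_j t` is
`i.descFactorial j • Y_j⁽ⁱ⁻ʲ⁾ 0`. It vanishes for `j > i`, equals `i! • Y_i 0` for `j = i`, and for
`j < i` it lies in `W_j ⊆ F^{i-1}`, since derivatives of a curve in a closed subspace stay in it.
-/

open Finset

section

variable {𝕜 F : Type*} [NontriviallyNormedField 𝕜] [NormedAddCommGroup F] [NormedSpace 𝕜 F]

theorem deriv_mem_of_forall_mem {p : Submodule 𝕜 F} (hp : IsClosed (p : Set F)) {f : 𝕜 → F}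
    (hf : ∀ x, f x ∈ p) (x : 𝕜) : deriv f x ∈ p := by
  have hspan : Submodule.span 𝕜 (f '' Set.univ) ≤ p :=
    Submodule.span_le.2 (Set.image_subset_iff.2 fun y _ => hf y)
  exact closure_minimal hspan hp (range_deriv_subset_closure_span_image f dense_univ ⟨x, rfl⟩)

theorem iteratedDeriv_mem_of_forall_mem {p : Submodule 𝕜 F} (hp : IsClosed (p : Set F))
    {f : 𝕜 → F} (hf : ∀ x, f x ∈ p) (n : ℕ) (x : 𝕜) : iteratedDeriv n f x ∈ p := by
  induction n generalizing f with
  | zero => exact hf x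
  | succ n ih => simpa only [iteratedDeriv_succ'] using ih (deriv_mem_of_forall_mem hp hf)

theorem iteratedDeriv_pow_smul_zero {g : 𝕜 → F} {n : ℕ} (hg : ContDiffAt 𝕜 n g 0) (j : ℕ) :
    iteratedDeriv n (fun t => t ^ j • g t) 0 = n.descFactorial j • iteratedDeriv (n - j) g 0 := by
  have hpow : ContDiffWithinAt 𝕜 n (fun t : 𝕜 => t ^ j) Set.univ 0 := by fun_prop
  have hleibniz :=
    iteratedDerivWithin_smul (Set.mem_univ 0) uniqueDiffOn_univ hpow hg.contDiffWithinAt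
  simp only [iteratedDerivWithin_univ] at hleibniz
  rw [show (fun t => t ^ j • g t) = (fun t : 𝕜 => t ^ j) • g from rfl, hleibniz]
  simp only [iteratedDeriv_fun_pow_zero, Nat.cast_ite, Nat.cast_zero, ite_smul, zero_smul,
    smul_ite, smul_zero, sum_ite_eq', mem_range, Nat.lt_succ_iff]
  split_ifs with hj
  · rw [Nat.descFactorial_eq_factorial_mul_choose, mul_nsmul, Nat.cast_smul_eq_nsmul, smul_comm]
  · rw [Nat.descFactorial_eq_zero_iff_lt.2 (not_le.1 hj), zero_smul]

theorem iteratedDeriv_sum_pow_smul_zero {s : Finset ℕ} {Y : ℕ → 𝕜 → F} {n : ℕ}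
    (hY : ∀ j ∈ s, ContDiffAt 𝕜 n (Y j) 0) :
    iteratedDeriv n (fun t => ∑ j ∈ s, t ^ j • Y j t) 0 =
      ∑ j ∈ s, n.descFactorial j • iteratedDeriv (n - j) (Y j) 0 := by
  rw [iteratedDeriv_fun_sum (f := fun j t => t ^ j • Y j t) fun j hj =>
    (contDiffAt_id.pow j).smul (hY j hj)]
  exact sum_congr rfl fun j hj => iteratedDeriv_pow_smul_zero (hY j hj) j

end

theorem ev_zero_agrees_general
    {V : Type*} [NormedAddCommGroup V] [NormedSpace ℝ V] [FiniteDimensional ℝ V]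
    (N : ℕ) (W : ℕ → Submodule ℝ V)
    (Y : ℕ → ℝ → V)
    (hYsmooth : ∀ i ∈ Finset.Icc 1 N, ContDiff ℝ (⊤ : ℕ∞) (Y i))
    (hYW : ∀ i ∈ Finset.Icc 1 N, ∀ t : ℝ, Y i t ∈ W i)
    (X : ℝ → V) (hX : X = fun t => ∑ i ∈ Finset.Icc 1 N, t ^ i • Y i t) :
    ∀ i ∈ Finset.Icc 1 N,
      ((i.factorial : ℝ)⁻¹) • iteratedDeriv i X 0 - Y i 0
        ∈ ⨆ l ∈ Finset.Icc 1 (min (i - 1) N), W l := by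
  intro i hi
  rw [hX, iteratedDeriv_sum_pow_smul_zero fun j hj =>
      ((hYsmooth j hj).of_le (WithTop.coe_le_coe.2 le_top)).contDiffAt,
    ← add_sum_erase _ _ hi, Nat.descFactorial_self, Nat.sub_self, iteratedDeriv_zero, smul_add,
    ← Nat.cast_smul_eq_nsmul ℝ, inv_smul_smul₀ (by positivity), add_sub_cancel_left]
  refine Submodule.smul_mem _ _ (Submodule.sum_mem _ fun j hj => ?_)
  obtain ⟨hji, hjN⟩ := mem_erase.1 hj
  rcases hji.lt_or_gt with hlt | hgt
  · have hWj_le : W j ≤ ⨆ l ∈ Icc 1 (min (i - 1) N), W l :=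
      le_iSup₂_of_le j (by simp only [mem_Icc] at hjN ⊢; omega) le_rfl
    exact hWj_le (Submodule.smul_of_tower_mem _ _ <| iteratedDeriv_mem_of_forall_mem
      (Submodule.closed_of_finiteDimensional _) (hYW j hjN) _ _)
  · rw [Nat.descFactorial_eq_zero_iff_lt.2 hgt, zero_smul]
    exact Submodule.zero_mem _

/-- with `X t = Σ_{i=1}^N t^i • Y_i t` as before, the `i`-th component of the
evaluation map `ev_0^H`, namely the class of `(1/i!)·∂_t^i X|_{t=0}` modulo
`F^{i-1} = W_1 + ⋯ + W_{min(i-1,N)}`, agrees with `Y_i 0`. -/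
theorem ev_zero_agrees
    {V : Type*} [NormedAddCommGroup V] [NormedSpace ℝ V] [FiniteDimensional ℝ V]
    (N : ℕ) (hN : 1 ≤ N) (W : ℕ → Submodule ℝ V)
    (hW : DirectSum.IsInternal W) (hW0 : W 0 = ⊥) (hWtop : ∀ i : ℕ, N < i → W i = ⊥)
    (Y : ℕ → ℝ → V)
    (hYsmooth : ∀ i ∈ Finset.Icc 1 N, ContDiff ℝ (⊤ : ℕ∞) (Y i))
    (hYW : ∀ i ∈ Finset.Icc 1 N, ∀ t : ℝ, Y i t ∈ W i)
    (X : ℝ → V) (hX : X = fun t => ∑ i ∈ Finset.Icc 1 N, t ^ i • Y i t) :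
    ∀ i ∈ Finset.Icc 1 N,
      ((i.factorial : ℝ)⁻¹) • iteratedDeriv i X 0 - Y i 0
        ∈ ⨆ l ∈ Finset.Icc 1 (min (i - 1) N), W l :=
  ev_zero_agrees_general N W Y hYsmooth hYW X hX
end
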